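/- arXiv:2602.10097 — 2 statements merged into one kernel-verified Lean document; each statement's English description precedes it below -/
import Mathlib

section
/- With h 2-wise independent, s 4-wise independent, and CS the associated CountSketch into ℝ^m, for any x, y ∈ ℝ^d: Var(⟨CS(x), CS(y)⟩) = (1/m)(Σ_{i≠j} x_i² y_j² + Σ_{i≠j} x_i y_i x_j y_j) ≤ (2/m) ‖x‖₂² ‖y‖₂². -/
open MeasureTheory ProbabilityTheory Finset
open scoped ENNReal

/-!
Write `⟨CS x, CS y⟩ = ⟨x, y⟩ + W` with `W = ∑_{i ≠ k} x_i y_k [h i = h k] s_i s_k`, using `s_i² = 1`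
on the diagonal. Since `h` and `s` are independent, every moment of `W` factors into a collision
probability of `h` and a moment of the signs. By 4-wise independence a product of at most four
distinct signs has mean zero, so `E W = 0`, and in `E W²` the cross term of the pairs `(i, k)` and
`(i', k')` survives only when `{i', k'} = {i, k}`; a collision has probability `1/m`, which gives
`Var ⟨CS x, CS y⟩ = E W² = (1/m) ∑_{i ≠ k} x_i y_k (x_i y_k + x_k y_i)`. For the bound, the first part
is at most `‖x‖² ‖y‖²` and the second is `⟨x, y⟩² - ∑ (x_i y_i)² ≤ ‖x‖² ‖y‖²` by Cauchy–Schwarz.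
-/

section Combinatorics

variable {ι β R : Type*}

theorem pair_eq_pair_iff_eq_or_eq_swap [DecidableEq ι] (p q : ι × ι) :
    ({p.1, p.2} : Finset ι) = {q.1, q.2} ↔ q = p ∨ q = p.swap := by
  rw [← coe_inj, coe_pair, coe_pair, Set.pair_eq_pair_iff]
  obtain ⟨a, b⟩ := p
  obtain ⟨c, d⟩ := q
  simp only [Prod.mk.injEq, Prod.swap_prod_mk]
  tauto

theorem sum_offDiag_eq_sum_sum_erase [DecidableEq ι] [AddCommMonoid R] (s : Finset ι)
    (f : ι × ι → R) : ∑ p ∈ s.offDiag, f p = ∑ i ∈ s, ∑ k ∈ s.erase i, f (i, k) :=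
  sum_finset_product _ _ _ fun p => by simp [and_comm, ne_comm]

theorem sum_offDiag_ite_eq_or_swap [DecidableEq ι] [AddCommMonoid R] {s : Finset ι}
    {p : ι × ι} (hp : p ∈ s.offDiag) (f : ι × ι → R) :
    ∑ q ∈ s.offDiag, (if q = p ∨ q = p.swap then f q else 0) = f p + f p.swap := by
  have hswap : p ≠ p.swap := fun h => (mem_offDiag.1 hp).2.2 (congrArg Prod.fst h)
  have hfilter : s.offDiag.filter (fun q => q = p ∨ q = p.swap) = {p, p.swap} := by
    ext q
    simp only [mem_filter, mem_insert, mem_singleton, and_iff_right_iff_imp]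
    rintro (rfl | rfl) <;> simp_all [mem_offDiag, ne_comm]
  rw [← sum_filter, hfilter, sum_pair hswap]

theorem sum_fiber_mul_sum_fiber [Fintype ι] [Fintype β] [DecidableEq β] [CommSemiring R]
    (g : ι → β) (a b : ι → R) :
    ∑ j, (∑ i ∈ univ.filter (g · = j), a i) * (∑ i ∈ univ.filter (g · = j), b i) =
      ∑ i, ∑ k, if g i = g k then a i * b k else 0 := by
  simp_rw [sum_filter, sum_mul_sum, ite_zero_mul_ite_zero]
  rw [sum_comm]
  refine sum_congr rfl fun i _ => ?_
  rw [sum_comm]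
  refine sum_congr rfl fun k _ => ?_
  simp only [ite_and, sum_ite_eq, mem_univ, if_true, eq_comm (a := g k)]

theorem sum_sum_erase_sq_mul_sq_le [DecidableEq ι] (s : Finset ι) (x y : ι → ℝ) :
    ∑ i ∈ s, ∑ j ∈ s.erase i, x i ^ 2 * y j ^ 2 ≤ (∑ i ∈ s, x i ^ 2) * ∑ i ∈ s, y i ^ 2 := by
  rw [sum_mul_sum]
  exact sum_le_sum fun i _ =>
    sum_le_sum_of_subset_of_nonneg (erase_subset _ _) fun _ _ _ => by positivity

theorem sum_sum_erase_mul_le [DecidableEq ι] (s : Finset ι) (x y : ι → ℝ) :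
    ∑ i ∈ s, ∑ j ∈ s.erase i, x i * y i * x j * y j ≤ (∑ i ∈ s, x i ^ 2) * ∑ i ∈ s, y i ^ 2 := by
  have hdiag : ∑ i ∈ s, ∑ j ∈ s.erase i, x i * y i * x j * y j =
      (∑ i ∈ s, x i * y i) ^ 2 - ∑ i ∈ s, (x i * y i) ^ 2 := by
    rw [sq, sum_mul_sum, ← sum_sub_distrib]
    refine sum_congr rfl fun i hi => ?_
    rw [← add_sum_erase _ _ hi, sq]
    simp only [add_sub_cancel_left, mul_assoc]
  calc _ = (∑ i ∈ s, x i * y i) ^ 2 - ∑ i ∈ s, (x i * y i) ^ 2 := hdiag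
    _ ≤ (∑ i ∈ s, x i * y i) ^ 2 := sub_le_self _ (sum_nonneg fun _ _ => sq_nonneg _)
    _ ≤ _ := sum_mul_sq_le_sq_mul_sq s x y

end Combinatorics

section Signs

variable {Ω ι : Type*} [MeasurableSpace Ω]

def IsKWiseUniformSigns (μ : Measure Ω) (s : Ω → ι → ℝ) (k : ℕ) : Prop :=
  ∀ I : Finset ι, I.card ≤ k → ∀ ε : ι → ℝ, (∀ i ∈ I, ε i = 1 ∨ ε i = -1) →
    μ {ω | ∀ i ∈ I, s ω i = ε i} = (1 / 2 : ℝ≥0∞) ^ I.card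

theorem IsKWiseUniformSigns.mono {μ : Measure Ω} {s : Ω → ι → ℝ} {j k : ℕ} (hk : IsKWiseUniformSigns μ s k) (hjk : j ≤ k) :
    IsKWiseUniformSigns μ s j :=
  fun I hI => hk I (hI.trans hjk)

theorem prod_eq_neg_one_pow_card_filter {J : Finset ι} {σ : ι → ℝ}
    (hσ : ∀ j ∈ J, σ j = 1 ∨ σ j = -1) :
    ∏ j ∈ J, σ j = (-1) ^ #(J.filter (σ · = -1)) := by
  classical
  rw [← prod_filter_mul_prod_filter_not J (σ · = -1),
    prod_congr rfl fun j hj => (mem_filter.1 hj).2, prod_const,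
    prod_eq_one fun j hj => (hσ j (mem_filter.1 hj).1).resolve_right (mem_filter.1 hj).2, mul_one]

theorem forall_eq_ite_iff_eq_filter [DecidableEq ι] {J K : Finset ι} (hKJ : K ⊆ J) {σ : ι → ℝ}
    (hσ : ∀ j ∈ J, σ j = 1 ∨ σ j = -1) :
    (∀ j ∈ J, σ j = if j ∈ K then -1 else 1) ↔ K = J.filter (σ · = -1) := by
  constructor
  · intro H
    ext j
    simp only [mem_filter]
    constructor
    · intro hjK
      exact ⟨hKJ hjK, by simpa [hjK] using H j (hKJ hjK)⟩
    · rintro ⟨hj, hσj⟩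
      by_contra hjK
      have := H j hj
      rw [if_neg hjK] at this
      linarith
  · rintro rfl j hj
    rcases hσ j hj with h | h <;> simp [hj, h]

theorem integral_prod_eq_zero_of_isKWiseUniformSigns {μ : Measure Ω} [IsFiniteMeasure μ]
    {s : Ω → ι → ℝ} {k : ℕ} (hs : Measurable s) (hsign : ∀ ω i, s ω i = 1 ∨ s ω i = -1)
    (hk : IsKWiseUniformSigns μ s k) {J : Finset ι} (hJ : J.Nonempty) (hJk : #J ≤ k) :
    ∫ ω, ∏ j ∈ J, s ω j ∂μ = 0 := by
  classical
  let E : Finset ι → Set Ω := fun K => {ω | ∀ j ∈ J, s ω j = if j ∈ K then -1 else 1}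
  have hE : ∀ K, MeasurableSet (E K) := fun K => by
    simp only [E, Set.ofPred_forall]
    exact .biInter J.countable_toSet fun j _ =>
      measurableSet_eq_fun ((measurable_pi_apply j).comp hs) measurable_const
  have hμE : ∀ K, μ (E K) = (1 / 2) ^ #J := fun K =>
    hk J hJk _ fun j _ => by split_ifs <;> simp
  -- the product is `(-1) ^ #K` on the event that `s` has sign pattern `K` on `J`
  have hexpand : ∀ ω, ∏ j ∈ J, s ω j = ∑ K ∈ J.powerset, (-1) ^ #K * (E K).indicator 1 ω := by
    intro ω
    have hind : ∀ K ∈ J.powerset,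
        (E K).indicator (1 : Ω → ℝ) ω = if K = J.filter (s ω · = -1) then 1 else 0 := by
      intro K hK
      simp only [Set.indicator_apply, E, Set.mem_ofPred_eq, Pi.one_apply,
        forall_eq_ite_iff_eq_filter (mem_powerset.1 hK) fun j _ => hsign ω j]
    rw [prod_eq_neg_one_pow_card_filter fun j _ => hsign ω j, sum_congr rfl fun K hK => by
      rw [hind K hK]]
    simp [filter_subset]
  have hsum : ∑ K ∈ J.powerset, (-1 : ℝ) ^ #K = 0 := by
    exact_mod_cast sum_powerset_neg_one_pow_card_of_nonempty hJ
  simp_rw [hexpand]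
  rw [integral_finsetSum _ fun K _ => ((integrable_const 1).indicator (hE K)).const_mul _]
  simp_rw [integral_const_mul, integral_indicator_one (hE _), measureReal_def, hμE, ← sum_mul,
    hsum, zero_mul]

theorem prod_mul_prod_eq_prod_symmDiff [DecidableEq ι] {A B : Finset ι} {σ : ι → ℝ}
    (hσ : ∀ j ∈ A ∩ B, σ j * σ j = 1) :
    (∏ j ∈ A, σ j) * ∏ j ∈ B, σ j = ∏ j ∈ symmDiff A B, σ j := by
  have hsq : (∏ j ∈ A ∩ B, σ j) * ∏ j ∈ A ∩ B, σ j = 1 := by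
    rw [← prod_mul_distrib]; exact prod_eq_one hσ
  rw [symmDiff_def, sup_eq_union, prod_union disjoint_sdiff_sdiff,
    ← prod_inter_mul_prod_sdiff A B, ← prod_inter_mul_prod_sdiff B A, inter_comm B A]
  linear_combination (∏ j ∈ A \ B, σ j) * (∏ j ∈ B \ A, σ j) * hsq

end Signs

section CountSketch

variable {Ω ι β : Type*} [MeasurableSpace Ω] {μ : Measure Ω} {m : ℕ}

def IsPairwiseUniform (μ : Measure Ω) (h : Ω → ι → Fin m) : Prop :=
  ∀ i j : ι, i ≠ j → ∀ a b : Fin m, μ {ω | h ω i = a ∧ h ω j = b} = 1 / (m : ℝ≥0∞) ^ 2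

def countSketch [Fintype ι] [DecidableEq β] (g : ι → β) (σ x : ι → ℝ) (j : β) : ℝ :=
  ∑ i ∈ univ.filter (g · = j), σ i * x i

def collision [DecidableEq β] (g : ι → β) (p : ι × ι) : ℝ :=
  if g p.1 = g p.2 then 1 else 0

-- the coefficient of `x i * y k` in `⟨CS x, CS y⟩` for `p = (i, k)`, `i ≠ k`
def collisionSign [DecidableEq β] (g : ι → β) (σ : ι → ℝ) (p : ι × ι) : ℝ :=
  collision g p * (σ p.1 * σ p.2)

theorem collision_swap [DecidableEq β] (g : ι → β) (p : ι × ι) :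
    collision g p.swap = collision g p := by
  simp [collision, eq_comm]

theorem collision_mul_self [DecidableEq β] (g : ι → β) (p : ι × ι) :
    collision g p * collision g p = collision g p := by
  unfold collision
  split_ifs <;> norm_num

theorem abs_collisionSign_le_one [DecidableEq β] (g : ι → β) {σ : ι → ℝ}
    (hσ : ∀ i, σ i = 1 ∨ σ i = -1) (p : ι × ι) : |collisionSign g σ p| ≤ 1 := by
  unfold collisionSign collision
  split_ifs <;> rcases hσ p.1 with h1 | h1 <;> rcases hσ p.2 with h2 | h2 <;> simp [h1, h2]

theorem sum_countSketch_mul_countSketch [Fintype ι] [DecidableEq ι] [Fintype β] [DecidableEq β]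
    (g : ι → β) {σ : ι → ℝ} (hσ : ∀ i, σ i * σ i = 1) (x y : ι → ℝ) :
    ∑ j, countSketch g σ x j * countSketch g σ y j =
      ∑ i, x i * y i + ∑ p ∈ univ.offDiag, x p.1 * y p.2 * collisionSign g σ p := by
  simp only [countSketch]
  rw [sum_fiber_mul_sum_fiber, sum_offDiag_eq_sum_sum_erase, ← sum_add_distrib]
  refine sum_congr rfl fun i _ => ?_
  rw [← add_sum_erase _ _ (mem_univ i), if_pos rfl]
  congr 1
  · linear_combination x i * y i * hσ i
  · refine sum_congr rfl fun k _ => ?_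
    simp only [collisionSign, collision]
    split_ifs <;> ring

theorem measurable_collision (p : ι × ι) : Measurable fun g : ι → Fin m => collision g p :=
  Measurable.ite (measurableSet_eq_fun (measurable_pi_apply _) (measurable_pi_apply _))
    measurable_const measurable_const

variable {h : Ω → ι → Fin m} {s : Ω → ι → ℝ}

theorem measurable_collisionSign (hh : Measurable h) (hs : Measurable s) (p : ι × ι) :
    Measurable fun ω => collisionSign (h ω) (s ω) p :=
  ((measurable_collision p).comp hh).mul (by fun_prop)

theorem integrable_collisionSign_mul [IsFiniteMeasure μ] (hh : Measurable h) (hs : Measurable s)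
    (hsign : ∀ ω i, s ω i = 1 ∨ s ω i = -1) (p q : ι × ι) :
    Integrable (fun ω => collisionSign (h ω) (s ω) p * collisionSign (h ω) (s ω) q) μ :=
  .of_bound ((measurable_collisionSign hh hs p).mul
    (measurable_collisionSign hh hs q)).aestronglyMeasurable 1 <| ae_of_all _ fun ω => by
      rw [Real.norm_eq_abs, abs_mul]
      exact mul_le_one₀ (abs_collisionSign_le_one _ (hsign ω) p) (abs_nonneg _)
        (abs_collisionSign_le_one _ (hsign ω) q)

theorem integrable_collisionSign [IsFiniteMeasure μ] (hh : Measurable h) (hs : Measurable s)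
    (hsign : ∀ ω i, s ω i = 1 ∨ s ω i = -1) (p : ι × ι) :
    Integrable (fun ω => collisionSign (h ω) (s ω) p) μ :=
  .of_bound (measurable_collisionSign hh hs p).aestronglyMeasurable 1 <|
    ae_of_all _ fun ω => abs_collisionSign_le_one _ (hsign ω) p

theorem measureReal_setOf_eq_eq_one_div [IsProbabilityMeasure μ] {X Y : Ω → Fin m}
    (hX : Measurable X) (hY : Measurable Y)
    (hXY : ∀ a, μ {ω | X ω = a ∧ Y ω = a} = 1 / (m : ℝ≥0∞) ^ 2) :
    μ.real {ω | X ω = Y ω} = 1 / m := by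
  obtain ⟨ω⟩ := nonempty_of_isProbabilityMeasure μ
  have hm : (m : ℝ) ≠ 0 := by simpa using (X ω).pos.ne'
  have hdiag : {ω | X ω = Y ω} = ⋃ a ∈ (univ : Finset (Fin m)), {ω | X ω = a ∧ Y ω = a} := by
    ext ω
    simp [eq_comm]
  rw [measureReal_def, hdiag, measure_biUnion_finset, sum_congr rfl fun a _ => hXY a]
  · simp only [sum_const, card_univ, Fintype.card_fin, nsmul_eq_mul, ENNReal.toReal_mul,
      ENNReal.toReal_div, ENNReal.toReal_pow, ENNReal.toReal_natCast, ENNReal.toReal_one]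
    field_simp
  · exact fun a _ b _ hab => Set.disjoint_left.2 fun ω h1 h2 => hab (h1.1.symm.trans h2.1)
  · exact fun a _ => (hX (measurableSet_singleton a)).inter (hY (measurableSet_singleton a))

theorem integral_collision [IsProbabilityMeasure μ] (hh : Measurable h)
    (hpair : IsPairwiseUniform μ h) {p : ι × ι} (hp : p.1 ≠ p.2) :
    ∫ ω, collision (h ω) p ∂μ = 1 / m := by
  have hX : Measurable fun ω => h ω p.1 := (measurable_pi_apply _).comp hh
  have hY : Measurable fun ω => h ω p.2 := (measurable_pi_apply _).comp hh
  rw [← measureReal_setOf_eq_eq_one_div hX hY fun a => hpair _ _ hp a a,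
    ← integral_indicator_one (measurableSet_eq_fun hX hY)]
  congr with ω
  simp [collision, Set.indicator_apply]

theorem integral_mul_eq_zero_of_isKWiseUniformSigns [IsFiniteMeasure μ] (hs : Measurable s)
    (hsign : ∀ ω i, s ω i = 1 ∨ s ω i = -1) (hk : IsKWiseUniformSigns μ s 2) {a b : ι}
    (hab : a ≠ b) : ∫ ω, s ω a * s ω b ∂μ = 0 := by
  classical
  simpa [prod_pair hab] using
    integral_prod_eq_zero_of_isKWiseUniformSigns hs hsign hk (insert_nonempty a {b}) card_le_two

theorem integral_pair_mul_pair_eq_ite [IsProbabilityMeasure μ] [DecidableEq ι] (hs : Measurable s)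
    (hsign : ∀ ω i, s ω i = 1 ∨ s ω i = -1) (hk : IsKWiseUniformSigns μ s 4) {p q : ι × ι}
    (hp : p.1 ≠ p.2) (hq : q.1 ≠ q.2) :
    ∫ ω, s ω p.1 * s ω p.2 * (s ω q.1 * s ω q.2) ∂μ = if q = p ∨ q = p.swap then 1 else 0 := by
  simp_rw [← prod_pair hp, ← prod_pair hq,
    prod_mul_prod_eq_prod_symmDiff fun j _ => mul_self_eq_one_iff.2 (hsign _ j)]
  split_ifs with hpq
  · simp [(pair_eq_pair_iff_eq_or_eq_swap p q).2 hpq]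
  · refine integral_prod_eq_zero_of_isKWiseUniformSigns hs hsign hk ?_ ?_
    · rw [nonempty_iff_ne_empty, ← bot_eq_empty, Ne, symmDiff_eq_bot,
        pair_eq_pair_iff_eq_or_eq_swap]
      exact hpq
    · calc #(symmDiff {p.1, p.2} {q.1, q.2}) ≤ #({p.1, p.2} ∪ {q.1, q.2}) :=
            card_le_card symmDiff_le_sup
        _ ≤ 2 + 2 := (card_union_le _ _).trans (add_le_add card_le_two card_le_two)

theorem integral_collisionSign [IsProbabilityMeasure μ] (hh : Measurable h) (hs : Measurable s)
    (hsign : ∀ ω i, s ω i = 1 ∨ s ω i = -1) (hk : IsKWiseUniformSigns μ s 2)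
    (hindep : IndepFun h s μ) {p : ι × ι} (hp : p.1 ≠ p.2) :
    ∫ ω, collisionSign (h ω) (s ω) p ∂μ = 0 := by
  have := hindep.integral_fun_comp_mul_comp (f := fun g => collision g p)
    (g := fun v : ι → ℝ => v p.1 * v p.2) hh.aemeasurable hs.aemeasurable
    (measurable_collision p).aestronglyMeasurable (by fun_prop)
  simp only [collisionSign]
  rw [this, integral_mul_eq_zero_of_isKWiseUniformSigns hs hsign hk hp, mul_zero]

theorem integral_collisionSign_mul [IsProbabilityMeasure μ] [DecidableEq ι] (hh : Measurable h)
    (hs : Measurable s) (hsign : ∀ ω i, s ω i = 1 ∨ s ω i = -1) (hpair : IsPairwiseUniform μ h)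
    (hk : IsKWiseUniformSigns μ s 4) (hindep : IndepFun h s μ) {p q : ι × ι} (hp : p.1 ≠ p.2)
    (hq : q.1 ≠ q.2) :
    ∫ ω, collisionSign (h ω) (s ω) p * collisionSign (h ω) (s ω) q ∂μ =
      if q = p ∨ q = p.swap then 1 / (m : ℝ) else 0 := by
  have := hindep.integral_fun_comp_mul_comp (f := fun g => collision g p * collision g q)
    (g := fun v : ι → ℝ => v p.1 * v p.2 * (v q.1 * v q.2)) hh.aemeasurable hs.aemeasurable
    ((measurable_collision p).mul (measurable_collision q)).aestronglyMeasurable (by fun_prop)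
  have hsplit : ∀ ω, collisionSign (h ω) (s ω) p * collisionSign (h ω) (s ω) q =
      collision (h ω) p * collision (h ω) q * (s ω p.1 * s ω p.2 * (s ω q.1 * s ω q.2)) := by
    intro ω
    simp only [collisionSign]
    ring
  simp_rw [hsplit]
  rw [this, integral_pair_mul_pair_eq_ite hs hsign hk hp hq]
  split_ifs with hpq
  · have hcoll : ∀ g : ι → Fin m, collision g q = collision g p := by
      rcases hpq with rfl | rfl
      · exact fun _ => rfl
      · exact fun g => collision_swap g p
    simp_rw [hcoll, collision_mul_self, integral_collision hh hpair hp, mul_one]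
  · rw [mul_zero]

theorem integral_sum_collisionSign_sq [IsProbabilityMeasure μ] [DecidableEq ι] (hh : Measurable h)
    (hs : Measurable s) (hsign : ∀ ω i, s ω i = 1 ∨ s ω i = -1) (hpair : IsPairwiseUniform μ h)
    (hk : IsKWiseUniformSigns μ s 4) (hindep : IndepFun h s μ) (S : Finset ι) (c : ι × ι → ℝ) :
    ∫ ω, (∑ p ∈ S.offDiag, c p * collisionSign (h ω) (s ω) p) ^ 2 ∂μ =
      1 / m * ∑ p ∈ S.offDiag, c p * (c p + c p.swap) := by
  have hexpand : ∀ ω, (∑ p ∈ S.offDiag, c p * collisionSign (h ω) (s ω) p) ^ 2 =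
      ∑ p ∈ S.offDiag, ∑ q ∈ S.offDiag,
        c p * c q * (collisionSign (h ω) (s ω) p * collisionSign (h ω) (s ω) q) := by
    intro ω
    rw [sq, sum_mul_sum]
    exact sum_congr rfl fun p _ => sum_congr rfl fun q _ => by ring
  simp_rw [hexpand]
  rw [integral_finsetSum _ fun p _ => integrable_finsetSum _ fun q _ =>
    (integrable_collisionSign_mul hh hs hsign p q).const_mul _, mul_sum]
  refine sum_congr rfl fun p hp => ?_
  rw [integral_finsetSum _ fun q _ => (integrable_collisionSign_mul hh hs hsign p q).const_mul _]
  have hp' := (mem_offDiag.1 hp).2.2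
  simp_rw [integral_const_mul]
  rw [sum_congr rfl fun q hq => by
    rw [integral_collisionSign_mul hh hs hsign hpair hk hindep hp' (mem_offDiag.1 hq).2.2]]
  simp_rw [mul_ite, mul_zero]
  rw [sum_offDiag_ite_eq_or_swap hp]
  ring

theorem variance_sum_countSketch_mul_countSketch [Fintype ι] [DecidableEq ι]
    [IsProbabilityMeasure μ] (hh : Measurable h) (hs : Measurable s)
    (hsign : ∀ ω i, s ω i = 1 ∨ s ω i = -1) (hpair : IsPairwiseUniform μ h)
    (hk : IsKWiseUniformSigns μ s 4) (hindep : IndepFun h s μ) (x y : ι → ℝ) :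
    Var[fun ω => ∑ j, countSketch (h ω) (s ω) x j * countSketch (h ω) (s ω) y j; μ] =
      1 / m * ((∑ i, ∑ j ∈ univ.erase i, x i ^ 2 * y j ^ 2) +
        ∑ i, ∑ j ∈ univ.erase i, x i * y i * x j * y j) := by
  set W := fun ω => ∑ p ∈ univ.offDiag, x p.1 * y p.2 * collisionSign (h ω) (s ω) p
  have hW : Measurable W :=
    Finset.measurable_sum _ fun p _ => (measurable_collisionSign hh hs p).const_mul _
  have hEW : ∫ ω, W ω ∂μ = 0 := by
    rw [integral_finsetSum _ fun p _ => (integrable_collisionSign hh hs hsign p).const_mul _]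
    refine sum_eq_zero fun p hp => ?_
    rw [integral_const_mul, integral_collisionSign hh hs hsign (hk.mono (by norm_num)) hindep
      (mem_offDiag.1 hp).2.2, mul_zero]
  simp_rw [sum_countSketch_mul_countSketch _ fun i => mul_self_eq_one_iff.2 (hsign _ i)]
  rw [variance_const_add hW.aestronglyMeasurable, variance_of_integral_eq_zero hW.aemeasurable hEW,
    integral_sum_collisionSign_sq hh hs hsign hpair hk hindep, sum_offDiag_eq_sum_sum_erase,
    ← sum_add_distrib]
  congr 1
  refine sum_congr rfl fun i _ => ?_
  rw [← sum_add_distrib]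
  exact sum_congr rfl fun j _ => by simp only [Prod.swap_prod_mk]; ring

end CountSketch

/-- CountSketch variance: with `h` 2-wise independent, `s` 4-wise independent uniform
signs, `h` independent of `s`, and `CS(x)_j = Σ_{i : h(i)=j} s(i) x_i`, for any
`x, y ∈ ℝ^d`:
`Var(⟨CS(x), CS(y)⟩) = (1/m)(Σ_{i≠j} x_i² y_j² + Σ_{i≠j} x_i y_i x_j y_j)
                     ≤ (2/m) ‖x‖₂² ‖y‖₂²`. -/
theorem stmt2 {Ω : Type*} [MeasurableSpace Ω] (μ : Measure Ω) [IsProbabilityMeasure μ]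
    (d m : ℕ)
    (h : Ω → Fin d → Fin m) (s : Ω → Fin d → ℝ)
    (hmh : Measurable h) (hms : Measurable s)
    (hsign : ∀ ω i, s ω i = 1 ∨ s ω i = -1)
    (h2wise : ∀ i j : Fin d, i ≠ j → ∀ a b : Fin m,
      μ {ω | h ω i = a ∧ h ω j = b} = 1 / (m : ℝ≥0∞) ^ 2)
    (h4wise : ∀ I : Finset (Fin d), I.card ≤ 4 → ∀ ε : Fin d → ℝ,
      (∀ i ∈ I, ε i = 1 ∨ ε i = -1) →
      μ {ω | ∀ i ∈ I, s ω i = ε i} = (1 / 2 : ℝ≥0∞) ^ I.card)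
    (hindep : IndepFun h s μ)
    (x y : Fin d → ℝ) :
    variance (fun ω => ∑ j : Fin m,
        (∑ i ∈ Finset.univ.filter fun i => h ω i = j, s ω i * x i) *
        (∑ i ∈ Finset.univ.filter fun i => h ω i = j, s ω i * y i)) μ
      = (1 / m) * ((∑ i : Fin d, ∑ j ∈ Finset.univ.erase i, x i ^ 2 * y j ^ 2)
          + ∑ i : Fin d, ∑ j ∈ Finset.univ.erase i, x i * y i * x j * y j) ∧
    variance (fun ω => ∑ j : Fin m,
        (∑ i ∈ Finset.univ.filter fun i => h ω i = j, s ω i * x i) *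
        (∑ i ∈ Finset.univ.filter fun i => h ω i = j, s ω i * y i)) μ
      ≤ (2 / m) * (∑ i, x i ^ 2) * (∑ i, y i ^ 2) := by
  have hvar := variance_sum_countSketch_mul_countSketch hmh hms hsign h2wise h4wise hindep x y
  refine ⟨hvar, ?_⟩
  calc _ = _ := hvar
    _ ≤ 1 / m * ((∑ i, x i ^ 2) * (∑ i, y i ^ 2) + (∑ i, x i ^ 2) * (∑ i, y i ^ 2)) := by
      gcongr
      · exact sum_sum_erase_sq_mul_sq_le _ x y
      · exact sum_sum_erase_mul_le _ x y
    _ = 2 / m * (∑ i, x i ^ 2) * (∑ i, y i ^ 2) := by ring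
end

section
/- Let h1 : [d] → [m], h2 : [d'] → [m] be independent 2-wise independent hashes, s1 : [d] → {±1}, s2 : [d'] → {±1} independent 4-wise independent sign hashes. Set H(i,j) = h1(i) + h2(j) mod m and S(i,j) = s1(i) s2(j), and let T be the induced TensorSketch operator on matrices. Then for any X, Y ∈ ℝ^{d×d'}, E[⟨T(X), T(Y)⟩] = ⟨X, Y⟩, the Frobenius inner product. -/
/-!
Expanding the squares, `⟨T X, T Y⟩ = Σ 1[H(i,j) = H(i',j')] S(i,j) S(i',j') X_{ij} Y_{i'j'}`.
Since the hash `H` depends only on `(h1, h2)`, it is independent of the signs, and `s1` is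
independent of `s2`; so each term has expectation
`P[H(i,j) = H(i',j')] · E[s1 i s1 i'] · E[s2 j s2 j'] · X_{ij} Y_{i'j'}`.
Pairwise uniformity of the signs makes `E[s i s i'] = δ_{ii'}`, so only the diagonal terms survive,
and there the collision indicator is identically `1`.
-/

open MeasureTheory ProbabilityTheory Finset Matrix
open scoped ENNReal

lemma sum_sketch_mul_sketch {ι κ M : Type*} [Fintype ι] [Fintype κ] [Fintype M] [DecidableEq M]
    (H : ι → κ → M) (S X Y : ι → κ → ℝ) :
    ∑ α, (∑ i, ∑ j, (if H i j = α then (1 : ℝ) else 0) * S i j * X i j) *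
        (∑ i, ∑ j, (if H i j = α then (1 : ℝ) else 0) * S i j * Y i j) =
      ∑ i, ∑ j, ∑ i', ∑ j',
        (if H i j = H i' j' then (1 : ℝ) else 0) * (S i j * S i' j') * (X i j * Y i' j') := by
  simp only [mul_comm (∑ i, ∑ j, _ * X i j), sum_mul, mul_sum]
  rw [sum_comm]; refine sum_congr rfl fun i _ => ?_
  rw [sum_comm]; refine sum_congr rfl fun j _ => ?_
  rw [sum_comm]; refine sum_congr rfl fun i' _ => ?_
  rw [sum_comm]; refine sum_congr rfl fun j' _ => ?_
  simp only [ite_mul, one_mul, zero_mul, sum_ite_eq, mem_univ, if_true]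
  split_ifs <;> ring

section

variable {Ω : Type*} [MeasurableSpace Ω] {μ : Measure Ω}

def IsKWiseUniformSign {ι : Type*} (μ : Measure Ω) (s : Ω → ι → ℝ) (k : ℕ) : Prop :=
  ∀ I : Finset ι, I.card ≤ k → ∀ ε : ι → ℝ, (∀ i ∈ I, ε i = 1 ∨ ε i = -1) →
    μ {ω | ∀ i ∈ I, s ω i = ε i} = (1 / 2 : ℝ≥0∞) ^ I.card

namespace IsKWiseUniformSign

variable {ι : Type*} {s : Ω → ι → ℝ} {k l : ℕ}

lemma mono (hs : IsKWiseUniformSign μ s k) (hlk : l ≤ k) : IsKWiseUniformSign μ s l :=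
  fun I hI => hs I (hI.trans hlk)

lemma measure_eq_and_eq [DecidableEq ι] (hs : IsKWiseUniformSign μ s 2) {i j : ι} (hij : i ≠ j)
    {a : ℝ} (ha : a = 1 ∨ a = -1) :
    μ {ω | s ω i = a ∧ s ω j = a} = (1 / 2 : ℝ≥0∞) ^ 2 := by
  have hcard : ({i, j} : Finset ι).card = 2 := card_pair hij
  simpa [hcard] using hs {i, j} hcard.le (fun _ => a) (fun _ _ => ha)

end IsKWiseUniformSign

lemma integral_eq_zero_of_sign [IsProbabilityMeasure μ] {f : Ω → ℝ} (hf : Measurable f)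
    (hsign : ∀ ω, f ω = 1 ∨ f ω = -1) (hhalf : μ {ω | f ω = 1} = 1 / 2) : ∫ ω, f ω ∂μ = 0 := by
  have hA : MeasurableSet {ω | f ω = 1} := hf (measurableSet_singleton 1)
  have hf_eq : ∀ ω, f ω = 2 * Set.indicator {ω | f ω = 1} (fun _ => (1 : ℝ)) ω - 1 := by
    intro ω
    rcases hsign ω with h | h <;> norm_num [Set.indicator, h]
  rw [integral_congr_ae (ae_of_all _ hf_eq),
    integral_sub (((integrable_const 1).indicator hA).const_mul 2) (integrable_const 1),
    integral_const_mul, integral_indicator_const _ hA, measureReal_def, hhalf]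
  simp

lemma integral_mul_eq_zero_of_sign [IsProbabilityMeasure μ] {f g : Ω → ℝ} (hf : Measurable f)
    (hg : Measurable g) (hfsign : ∀ ω, f ω = 1 ∨ f ω = -1) (hgsign : ∀ ω, g ω = 1 ∨ g ω = -1)
    (hpos : μ {ω | f ω = 1 ∧ g ω = 1} = (1 / 2 : ℝ≥0∞) ^ 2)
    (hneg : μ {ω | f ω = -1 ∧ g ω = -1} = (1 / 2 : ℝ≥0∞) ^ 2) :
    ∫ ω, f ω * g ω ∂μ = 0 := by
  refine integral_eq_zero_of_sign (hf.mul hg) (fun ω => ?_) ?_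
  · rcases hfsign ω with h | h <;> rcases hgsign ω with h' | h' <;> simp [h, h']
  have hsplit : {ω | f ω * g ω = 1} = {ω | f ω = 1 ∧ g ω = 1} ∪ {ω | f ω = -1 ∧ g ω = -1} := by
    ext ω
    rcases hfsign ω with h | h <;> rcases hgsign ω with h' | h' <;> norm_num [h, h']
  have hdisj : Disjoint {ω | f ω = 1 ∧ g ω = 1} {ω | f ω = -1 ∧ g ω = -1} :=
    Set.disjoint_left.2 fun ω h h' => by linarith [h.1, h'.1]
  have hmeas : MeasurableSet {ω | f ω = -1 ∧ g ω = -1} :=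
    (hf (measurableSet_singleton _)).inter (hg (measurableSet_singleton _))
  rw [hsplit, measure_union hdisj hmeas, hpos, hneg, ← two_mul, pow_two, ← mul_assoc, one_div,
    ENNReal.mul_inv_cancel two_ne_zero ENNReal.ofNat_ne_top, one_mul]

lemma IsKWiseUniformSign.integral_mul_eq_ite {ι : Type*} [DecidableEq ι] [IsProbabilityMeasure μ]
    {s : Ω → ι → ℝ} (hs : IsKWiseUniformSign μ s 2) (hmeas : Measurable s)
    (hsign : ∀ ω i, s ω i = 1 ∨ s ω i = -1) (i j : ι) :
    ∫ ω, s ω i * s ω j ∂μ = if i = j then 1 else 0 := by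
  split_ifs with hij
  · subst hij
    have hsq : ∀ ω, s ω i * s ω i = 1 := fun ω => by rcases hsign ω i with h | h <;> simp [h]
    simp [hsq]
  · exact integral_mul_eq_zero_of_sign (measurable_pi_apply i |>.comp hmeas)
      (measurable_pi_apply j |>.comp hmeas) (hsign · i) (hsign · j)
      (hs.measure_eq_and_eq hij (Or.inl rfl)) (hs.measure_eq_and_eq hij (Or.inr rfl))

lemma integral_comp_mul_comp_mul_comp {β γ δ : Type*} [MeasurableSpace β] [MeasurableSpace γ]
    [MeasurableSpace δ] {H : Ω → β} {A : Ω → γ} {B : Ω → δ}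
    (hH : Measurable H) (hA : Measurable A) (hB : Measurable B)
    (hHAB : IndepFun H (fun ω => (A ω, B ω)) μ) (hAB : IndepFun A B μ)
    {φ : β → ℝ} {f : γ → ℝ} {g : δ → ℝ} (hφ : Measurable φ) (hf : Measurable f)
    (hg : Measurable g) :
    ∫ ω, φ (H ω) * (f (A ω) * g (B ω)) ∂μ =
      (∫ ω, φ (H ω) ∂μ) * ((∫ ω, f (A ω) ∂μ) * ∫ ω, g (B ω) ∂μ) := by
  rw [hHAB.integral_fun_comp_mul_comp (g := fun p => f p.1 * g p.2) hH.aemeasurable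
      (hA.prodMk hB).aemeasurable hφ.aestronglyMeasurable (by fun_prop),
    hAB.integral_fun_comp_mul_comp hA.aemeasurable hB.aemeasurable hf.aestronglyMeasurable
      hg.aestronglyMeasurable]

theorem integral_sum_sketch_mul_sketch {ι κ M : Type*} [Fintype ι] [Fintype κ] [DecidableEq ι]
    [DecidableEq κ] [Fintype M] [DecidableEq M] [MeasurableSpace M] [MeasurableSingletonClass M]
    [IsProbabilityMeasure μ] (H : Ω → ι → κ → M) (s₁ : Ω → ι → ℝ) (s₂ : Ω → κ → ℝ)
    (hH : Measurable H) (hs₁ : Measurable s₁) (hs₂ : Measurable s₂)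
    (hsign₁ : ∀ ω i, s₁ ω i = 1 ∨ s₁ ω i = -1) (hsign₂ : ∀ ω j, s₂ ω j = 1 ∨ s₂ ω j = -1)
    (hu₁ : IsKWiseUniformSign μ s₁ 2) (hu₂ : IsKWiseUniformSign μ s₂ 2)
    (hindep_s : IndepFun s₁ s₂ μ) (hindep_Hs : IndepFun H (fun ω => (s₁ ω, s₂ ω)) μ)
    (X Y : ι → κ → ℝ) :
    ∫ ω, (∑ α, (∑ i, ∑ j, (if H ω i j = α then (1 : ℝ) else 0) * (s₁ ω i * s₂ ω j) * X i j) *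
        (∑ i, ∑ j, (if H ω i j = α then (1 : ℝ) else 0) * (s₁ ω i * s₂ ω j) * Y i j)) ∂μ =
      ∑ i, ∑ j, X i j * Y i j := by
  set φ : ι → κ → ι → κ → (ι → κ → M) → ℝ := fun i j i' j' h =>
    if h i j = h i' j' then 1 else 0
  have hφ : ∀ i j i' j', Measurable (φ i j i' j') := fun _ _ _ _ => measurable_of_countable _
  have hterm : ∀ i j i' j' ω, (if H ω i j = H ω i' j' then (1 : ℝ) else 0) *
      (s₁ ω i * s₂ ω j * (s₁ ω i' * s₂ ω j')) * (X i j * Y i' j') =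
        φ i j i' j' (H ω) * (s₁ ω i * s₁ ω i' * (s₂ ω j * s₂ ω j')) * (X i j * Y i' j') :=
    fun i j i' j' ω => by simp only [φ]; ring
  have hint : ∀ i j i' j', Integrable (fun ω =>
      φ i j i' j' (H ω) * (s₁ ω i * s₁ ω i' * (s₂ ω j * s₂ ω j')) * (X i j * Y i' j')) μ := by
    intro i j i' j'
    refine .mul_const (.of_bound (by fun_prop) 1 (ae_of_all _ fun ω => ?_)) _
    have habs : ∀ x : ℝ, x = 1 ∨ x = -1 → |x| = 1 := fun x hx => (abs_eq zero_le_one).2 hx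
    simp only [φ, Real.norm_eq_abs, abs_mul, habs _ (hsign₁ ω _), habs _ (hsign₂ ω _)]
    split_ifs <;> norm_num
  have hexp : ∀ i j i' j', ∫ ω, φ i j i' j' (H ω) * (s₁ ω i * s₁ ω i' * (s₂ ω j * s₂ ω j')) ∂μ =
      (∫ ω, φ i j i' j' (H ω) ∂μ) * ((if i = i' then 1 else 0) * if j = j' then 1 else 0) := by
    intro i j i' j'
    rw [integral_comp_mul_comp_mul_comp (f := fun x => x i * x i') (g := fun y => y j * y j')
      hH hs₁ hs₂ hindep_Hs hindep_s (hφ i j i' j') (by fun_prop) (by fun_prop),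
      hu₁.integral_mul_eq_ite hs₁ hsign₁, hu₂.integral_mul_eq_ite hs₂ hsign₂]
  rw [integral_congr_ae (ae_of_all _ fun ω =>
    sum_sketch_mul_sketch (H ω) (fun i j => s₁ ω i * s₂ ω j) X Y)]
  simp only [hterm]
  simp (disch := intro _ _; fun_prop) only [integral_finsetSum, integral_mul_const, hexp]
  simp [φ, ite_mul]

end

theorem stmt4_general {Ω : Type*} [MeasurableSpace Ω] (μ : Measure Ω) [IsProbabilityMeasure μ]
    (d d' m : ℕ)
    (h1 : Ω → Fin d → Fin m) (h2 : Ω → Fin d' → Fin m)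
    (s1 : Ω → Fin d → ℝ) (s2 : Ω → Fin d' → ℝ)
    (hmh1 : Measurable h1) (hmh2 : Measurable h2)
    (hms1 : Measurable s1) (hms2 : Measurable s2)
    (hsign1 : ∀ ω i, s1 ω i = 1 ∨ s1 ω i = -1)
    (hsign2 : ∀ ω j, s2 ω j = 1 ∨ s2 ω j = -1)
    (s1fourwise : ∀ I : Finset (Fin d), I.card ≤ 4 → ∀ ε : Fin d → ℝ,
      (∀ i ∈ I, ε i = 1 ∨ ε i = -1) →
      μ {ω | ∀ i ∈ I, s1 ω i = ε i} = (1 / 2 : ℝ≥0∞) ^ I.card)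
    (s2fourwise : ∀ I : Finset (Fin d'), I.card ≤ 4 → ∀ ε : Fin d' → ℝ,
      (∀ j ∈ I, ε j = 1 ∨ ε j = -1) →
      μ {ω | ∀ j ∈ I, s2 ω j = ε j} = (1 / 2 : ℝ≥0∞) ^ I.card)
    (hindep_s : IndepFun s1 s2 μ)
    (hindep_hs : IndepFun (fun ω => (h1 ω, h2 ω)) (fun ω => (s1 ω, s2 ω)) μ)
    (X Y : Matrix (Fin d) (Fin d') ℝ) :
    ∫ ω, (∑ α : Fin m,
        (∑ i, ∑ j, (if h1 ω i + h2 ω j = α then (1 : ℝ) else 0) *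
            (s1 ω i * s2 ω j) * X i j) *
        (∑ i, ∑ j, (if h1 ω i + h2 ω j = α then (1 : ℝ) else 0) *
            (s1 ω i * s2 ω j) * Y i j)) ∂μ
      = ∑ i, ∑ j, X i j * Y i j := by
  have hcombine : Measurable fun (p : (Fin d → Fin m) × (Fin d' → Fin m)) i j =>
      p.1 i + p.2 j := measurable_of_countable _
  exact integral_sum_sketch_mul_sketch (fun ω i j => h1 ω i + h2 ω j) s1 s2
    (hcombine.comp (hmh1.prodMk hmh2)) hms1 hms2 hsign1 hsign2
    (IsKWiseUniformSign.mono (k := 4) s1fourwise (by norm_num))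
    (IsKWiseUniformSign.mono (k := 4) s2fourwise (by norm_num))
    hindep_s (hindep_hs.comp hcombine measurable_id) X Y

/-- TensorSketch unbiasedness: with `h1, h2` 2-wise independent hashes into `[m]`,
`s1, s2` 4-wise independent uniform signs, all mutually independent,
`H(i,j) = h1(i) + h2(j) mod m`, `S(i,j) = s1(i) s2(j)`, and
`T(A)_α = Σ_{i,j} 1[H(i,j)=α] S(i,j) A_{ij}`, for any `X, Y ∈ ℝ^{d×d'}`:
`E[⟨T(X), T(Y)⟩] = ⟨X, Y⟩` (Frobenius inner product). -/
theorem stmt4 {Ω : Type*} [MeasurableSpace Ω] (μ : Measure Ω) [IsProbabilityMeasure μ]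
    (d d' m : ℕ)
    (h1 : Ω → Fin d → Fin m) (h2 : Ω → Fin d' → Fin m)
    (s1 : Ω → Fin d → ℝ) (s2 : Ω → Fin d' → ℝ)
    (hmh1 : Measurable h1) (hmh2 : Measurable h2)
    (hms1 : Measurable s1) (hms2 : Measurable s2)
    (hsign1 : ∀ ω i, s1 ω i = 1 ∨ s1 ω i = -1)
    (hsign2 : ∀ ω j, s2 ω j = 1 ∨ s2 ω j = -1)
    (h1twowise : ∀ i j : Fin d, i ≠ j → ∀ a b : Fin m,
      μ {ω | h1 ω i = a ∧ h1 ω j = b} = 1 / (m : ℝ≥0∞) ^ 2)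
    (h2twowise : ∀ i j : Fin d', i ≠ j → ∀ a b : Fin m,
      μ {ω | h2 ω i = a ∧ h2 ω j = b} = 1 / (m : ℝ≥0∞) ^ 2)
    (s1fourwise : ∀ I : Finset (Fin d), I.card ≤ 4 → ∀ ε : Fin d → ℝ,
      (∀ i ∈ I, ε i = 1 ∨ ε i = -1) →
      μ {ω | ∀ i ∈ I, s1 ω i = ε i} = (1 / 2 : ℝ≥0∞) ^ I.card)
    (s2fourwise : ∀ I : Finset (Fin d'), I.card ≤ 4 → ∀ ε : Fin d' → ℝ,
      (∀ j ∈ I, ε j = 1 ∨ ε j = -1) →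
      μ {ω | ∀ j ∈ I, s2 ω j = ε j} = (1 / 2 : ℝ≥0∞) ^ I.card)
    (hindep_h : IndepFun h1 h2 μ) (hindep_s : IndepFun s1 s2 μ)
    (hindep_hs : IndepFun (fun ω => (h1 ω, h2 ω)) (fun ω => (s1 ω, s2 ω)) μ)
    (X Y : Matrix (Fin d) (Fin d') ℝ) :
    ∫ ω, (∑ α : Fin m,
        (∑ i, ∑ j, (if h1 ω i + h2 ω j = α then (1 : ℝ) else 0) *
            (s1 ω i * s2 ω j) * X i j) *
        (∑ i, ∑ j, (if h1 ω i + h2 ω j = α then (1 : ℝ) else 0) *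
            (s1 ω i * s2 ω j) * Y i j)) ∂μ
      = ∑ i, ∑ j, X i j * Y i j :=
  stmt4_general μ d d' m h1 h2 s1 s2 hmh1 hmh2 hms1 hms2 hsign1 hsign2 s1fourwise s2fourwise
    hindep_s hindep_hs X Y
end
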